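/- (Soundness of GLS_seq.) If a second-level sequent Ψ ⇛ Φ is provable in GLS_seq, then there is a finite set Σ of formulas such that for every GL-model ⟨W,R,V⟩ and every Σ-reflexive world w ∈ W, the sequent Ψ ⇛ Φ is true at w. Moreover, Σ can be taken to be the set of principal formulas of all (□L) rules occurring in a given GLS_seq-proof of Ψ ⇛ Φ. -/
import Mathlib


/-- Modal formulas: propositional variables, ⊥, →, □. -/
inductive Formula : Type
  | var : ℕ → Formula
  | bot : Formula
  | imp : Formula → Formula → Formula
  | box : Formula → Formula
deriving DecidableEq

/-- Levels of sequents in GLS_seq: first level (⇒) and second level (⇛). -/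
inductive SeqLevel : Type
  | one
  | two
deriving DecidableEq

/-- The set of subformulas of a formula. -/
def Formula.subf : Formula → Finset Formula
  | .var p => {.var p}
  | .bot => {.bot}
  | .imp φ ψ => insert (.imp φ ψ) (φ.subf ∪ ψ.subf)
  | .box φ => insert (.box φ) φ.subf

/-- SF(Ψ,Φ): all subformulas of formulas in Ψ ∪ Φ. -/
def SF (Ψ Φ : Finset Formula) : Finset Formula := (Ψ ∪ Φ).biUnion Formula.subf

def Formula.isBox : Formula → Bool
  | .box _ => true
  | _ => false

def Formula.unbox : Formula → Formula
  | .box φ => φ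
  | φ => φ

/-- Θ_□ = {φ : □φ ∈ Θ}. -/
def boxInv (Θ : Finset Formula) : Finset Formula :=
  (Θ.filter fun ψ => ψ.isBox).image Formula.unbox

/-- The sequent calculus GLS_seq, on sequents of two levels.  The Bool parameter
records whether the cut rule may be used: `GLSSeq true` is provability in GLS_seq,
`GLSSeq false` is cut-free provability.  The first-level fragment is exactly GL_seq. -/
inductive GLSSeq : Bool → SeqLevel → Finset Formula → Finset Formula → Prop
  | init (c lv φ) : GLSSeq c lv {φ} {φ}
  | initBot (c lv) : GLSSeq c lv {Formula.bot} ∅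
  | cut {lv Γ Δ} (φ) : GLSSeq true lv Γ (insert φ Δ) → GLSSeq true lv (insert φ Γ) Δ →
      GLSSeq true lv Γ Δ
  | weak {c lv Γ Δ Γ' Δ'} : Γ ⊆ Γ' → Δ ⊆ Δ' → GLSSeq c lv Γ Δ → GLSSeq c lv Γ' Δ'
  | impL {c lv Γ Δ φ ψ} : GLSSeq c lv Γ (insert φ Δ) → GLSSeq c lv (insert ψ Γ) Δ →
      GLSSeq c lv (insert (.imp φ ψ) Γ) Δ
  | impR {c lv Γ Δ φ ψ} : GLSSeq c lv (insert φ Γ) (insert ψ Δ) →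
      GLSSeq c lv Γ (insert (.imp φ ψ) Δ)
  | boxGL {c Γ φ} : GLSSeq c .one (Γ ∪ Γ.image .box ∪ {.box φ}) {φ} →
      GLSSeq c .one (Γ.image .box) {.box φ}
  | boxL {c Γ Δ} (φ) : GLSSeq c .two (insert φ Γ) Δ → GLSSeq c .two (insert (.box φ) Γ) Δ
  | lift {c Γ Δ} : GLSSeq c .one Γ Δ → GLSSeq c .two Γ Δ

/-- The sequent calculus GL_seq (on first-level sequents only). -/
inductive GLSeq : Bool → Finset Formula → Finset Formula → Prop
  | init (c φ) : GLSeq c {φ} {φ}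
  | initBot (c) : GLSeq c {Formula.bot} ∅
  | cut {Γ Δ} (φ) : GLSeq true Γ (insert φ Δ) → GLSeq true (insert φ Γ) Δ → GLSeq true Γ Δ
  | weak {c Γ Δ Γ' Δ'} : Γ ⊆ Γ' → Δ ⊆ Δ' → GLSeq c Γ Δ → GLSeq c Γ' Δ'
  | impL {c Γ Δ φ ψ} : GLSeq c Γ (insert φ Δ) → GLSeq c (insert ψ Γ) Δ →
      GLSeq c (insert (.imp φ ψ) Γ) Δ
  | impR {c Γ Δ φ ψ} : GLSeq c (insert φ Γ) (insert ψ Δ) → GLSeq c Γ (insert (.imp φ ψ) Δ)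
  | boxGL {c Γ φ} : GLSeq c (Γ ∪ Γ.image .box ∪ {.box φ}) {φ} → GLSeq c (Γ.image .box) {.box φ}

/-- Proof trees of GLS_seq (cut included). -/
inductive GLSTree : SeqLevel → Finset Formula → Finset Formula → Type
  | init (lv φ) : GLSTree lv {φ} {φ}
  | initBot (lv) : GLSTree lv {Formula.bot} ∅
  | cut {lv Γ Δ} (φ) : GLSTree lv Γ (insert φ Δ) → GLSTree lv (insert φ Γ) Δ → GLSTree lv Γ Δ
  | weak {lv Γ Δ} (Γ' Δ' : Finset Formula) : Γ ⊆ Γ' → Δ ⊆ Δ' → GLSTree lv Γ Δ → GLSTree lv Γ' Δ'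
  | impL {lv Γ Δ} (φ ψ) : GLSTree lv Γ (insert φ Δ) → GLSTree lv (insert ψ Γ) Δ →
      GLSTree lv (insert (.imp φ ψ) Γ) Δ
  | impR {lv Γ Δ} (φ ψ) : GLSTree lv (insert φ Γ) (insert ψ Δ) → GLSTree lv Γ (insert (.imp φ ψ) Δ)
  | boxGL (Γ φ) : GLSTree .one (Γ ∪ Γ.image .box ∪ {.box φ}) {φ} → GLSTree .one (Γ.image .box) {.box φ}
  | boxL {Γ Δ} (φ) : GLSTree .two (insert φ Γ) Δ → GLSTree .two (insert (.box φ) Γ) Δ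
  | lift {Γ Δ} : GLSTree .one Γ Δ → GLSTree .two Γ Δ

/-- The set of principal formulas of all (□L) rules occurring in a proof tree. -/
def GLSTree.principals : ∀ {lv Γ Δ}, GLSTree lv Γ Δ → Finset Formula
  | _, _, _, .init _ _ => ∅
  | _, _, _, .initBot _ => ∅
  | _, _, _, .cut _ t₁ t₂ => t₁.principals ∪ t₂.principals
  | _, _, _, .weak _ _ _ _ t => t.principals
  | _, _, _, .impL _ _ t₁ t₂ => t₁.principals ∪ t₂.principals
  | _, _, _, .impR _ _ t => t.principals
  | _, _, _, .boxGL _ _ t => t.principals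
  | _, _, _, .boxL φ t => insert (Formula.box φ) t.principals
  | _, _, _, .lift t => t.principals

/-- A proof tree bundled with its level and conclusion. -/
abbrev PGLSTree : Type :=
  (lv : SeqLevel) × (Γ : Finset Formula) × (Δ : Finset Formula) × GLSTree lv Γ Δ

/-- The set of subproofs of a proof tree (including the tree itself). -/
def GLSTree.subproofs {lv Γ Δ} (t : GLSTree lv Γ Δ) : Set PGLSTree :=
  insert ⟨lv, Γ, Δ, t⟩ <|
    match lv, Γ, Δ, t with
    | _, _, _, .init _ _ => ∅
    | _, _, _, .initBot _ => ∅
    | _, _, _, .cut _ t₁ t₂ => t₁.subproofs ∪ t₂.subproofs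
    | _, _, _, .weak _ _ _ _ t₁ => t₁.subproofs
    | _, _, _, .impL _ _ t₁ t₂ => t₁.subproofs ∪ t₂.subproofs
    | _, _, _, .impR _ _ t₁ => t₁.subproofs
    | _, _, _, .boxGL _ _ t₁ => t₁.subproofs
    | _, _, _, .boxL _ t₁ => t₁.subproofs
    | _, _, _, .lift t₁ => t₁.subproofs

/-- Kripke satisfaction over a frame `R` with atomic valuation `v`. -/
def KSat {W : Type} (R : W → W → Prop) (v : W → ℕ → Prop) : Formula → W → Prop
  | .var p, w => v w p
  | .bot, _ => False
  | .imp φ ψ, w => KSat R v φ w → KSat R v ψ w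
  | .box φ, w => ∀ w', R w w' → KSat R v φ w'

/-- A GL-model: a nonempty, transitive, converse well-founded Kripke model. -/
structure GLModel where
  World : Type
  ne : Nonempty World
  R : World → World → Prop
  trans : Transitive R
  cwf : ∀ f : ℕ → World, ¬ ∀ i, R (f i) (f (i + 1))
  val : World → ℕ → Prop

/-- Truth of a formula at a world of a GL-model. -/
def GLModel.sat (M : GLModel) (w : M.World) (φ : Formula) : Prop := KSat M.R M.val φ w

/-- Truth of a sequent Γ ▸ Δ at a world: some γ ∈ Γ is false or some δ ∈ Δ is true. -/
def GLModel.seqTrue (M : GLModel) (w : M.World) (Γ Δ : Finset Formula) : Prop :=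
  (∃ γ ∈ Γ, ¬ M.sat w γ) ∨ (∃ δ ∈ Δ, M.sat w δ)

/-- w is Σ-reflexive: □α → α is true at w for every □α ∈ Σ. -/
def GLModel.reflexiveFor (M : GLModel) (w : M.World) (S : Finset Formula) : Prop :=
  ∀ α : Formula, Formula.box α ∈ S → M.sat w ((Formula.box α).imp α)

/-- Saturation conditions (→L), (→R) for first-level sequents. -/
def Saturated1 (Γ Δ : Finset Formula) : Prop :=
  (∀ φ ψ : Formula, φ.imp ψ ∈ Γ → φ ∈ Δ ∨ ψ ∈ Γ) ∧
  (∀ φ ψ : Formula, φ.imp ψ ∈ Δ → φ ∈ Γ ∧ ψ ∈ Δ)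

/-- Saturation for second-level sequents: additionally (□L). -/
def Saturated2 (Γ Δ : Finset Formula) : Prop :=
  Saturated1 Γ Δ ∧ ∀ φ : Formula, Formula.box φ ∈ Γ → φ ∈ Γ

def Saturated : SeqLevel → Finset Formula → Finset Formula → Prop
  | .one => Saturated1
  | .two => Saturated2

/-- The Hilbert system GL. -/
inductive GLHilbert : Formula → Prop
  | ax1 (φ ψ : Formula) : GLHilbert (φ.imp (ψ.imp φ))
  | ax2 (φ ψ χ : Formula) :
      GLHilbert ((φ.imp (ψ.imp χ)).imp ((φ.imp ψ).imp (φ.imp χ)))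
  | ax3 (φ : Formula) : GLHilbert (((φ.imp .bot).imp .bot).imp φ)
  | axK (φ ψ : Formula) :
      GLHilbert ((Formula.box (φ.imp ψ)).imp ((Formula.box φ).imp (Formula.box ψ)))
  | axLob (φ : Formula) :
      GLHilbert ((Formula.box ((Formula.box φ).imp φ)).imp (Formula.box φ))
  | mp {φ ψ} : GLHilbert (φ.imp ψ) → GLHilbert φ → GLHilbert ψ
  | nec {φ} : GLHilbert φ → GLHilbert (Formula.box φ)

/-- The Hilbert system GLS: theorems of GL and all □α → α, closed under modus ponens. -/
inductive GLSHilbert : Formula → Prop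
  | gl {φ} : GLHilbert φ → GLSHilbert φ
  | refl (α : Formula) : GLSHilbert ((Formula.box α).imp α)
  | mp {φ ψ} : GLSHilbert (φ.imp ψ) → GLSHilbert φ → GLSHilbert ψ

/-- Conjunction (encoded with → and ⊥) of a list of formulas; empty conjunction is ⊤. -/
def Formula.conj : List Formula → Formula
  | [] => Formula.bot.imp Formula.bot
  | φ :: l => ((φ.imp ((Formula.conj l).imp .bot)).imp .bot)

/-- Membership predicate for the canonical model: saturated first-level sequents over S
that are not cut-free provable in GLS_seq. -/
def W0pred (S : Finset Formula) (s : Finset Formula × Finset Formula) : Prop :=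
  Saturated1 s.1 s.2 ∧ ¬ GLSSeq false SeqLevel.one s.1 s.2 ∧ s.1 ∪ s.2 ⊆ S

/-- Worlds of the canonical model. -/
def W0 (S : Finset Formula) : Type := {s : Finset Formula × Finset Formula // W0pred S s}

/-- Accessibility of the canonical model: (Γ⇒Δ) R₀ (Γ'⇒Δ') iff Γ_□ ⊊ Γ'_□ and Γ_□ ⊆ Γ'. -/
def R0 (S : Finset Formula) (s t : W0 S) : Prop :=
  boxInv s.1.1 ⊂ boxInv t.1.1 ∧ boxInv s.1.1 ⊆ t.1.1

/-- Valuation of the canonical model: p is true at (Γ⇒Δ) iff p ∈ Γ. -/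
def V0 (S : Finset Formula) (s : W0 S) (p : ℕ) : Prop := Formula.var p ∈ s.1.1

/-- The extended set of worlds W = W₀ ∪ ℕ. -/
def Wext (S : Finset Formula) : Type := W0 S ⊕ ℕ

/-- The extended accessibility relation, with distinguished world `wp` in W₀. -/
def Rext (S : Finset Formula) (wp : W0 S) : Wext S → Wext S → Prop
  | Sum.inl x, Sum.inl y => R0 S x y
  | Sum.inr _, Sum.inl y => y = wp ∨ R0 S wp y
  | Sum.inr n, Sum.inr m => m < n
  | Sum.inl _, Sum.inr _ => False

/-- The extended valuation: worlds in ℕ behave like the distinguished world `wp`. -/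
def Vext (S : Finset Formula) (wp : W0 S) : Wext S → ℕ → Prop
  | Sum.inl x, p => V0 S x p
  | Sum.inr _, p => V0 S wp p
section Soundness

open Finset

lemma GLModel.max_exists (M : GLModel) (A : Set M.World) (hA : ∃ x, x ∈ A) :
    ∃ y ∈ A, ∀ z ∈ A, ¬ M.R y z := by
  by_contra h
  push_neg at h
  obtain ⟨x0, hx0⟩ := hA
  choose g hg1 hg2 using h
  let f : ℕ → {x // x ∈ A} :=
    fun n => Nat.rec ⟨x0, hx0⟩ (fun _ p => ⟨g p.1 p.2, hg1 p.1 p.2⟩) n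
  exact M.cwf (fun n => (f n).1) (fun i => hg2 (f i).1 (f i).2)

lemma seqTrue_iff (M : GLModel) (w : M.World) (Γ Δ : Finset Formula) :
    M.seqTrue w Γ Δ ↔ ¬ ((∀ γ ∈ Γ, M.sat w γ) ∧ (∀ δ ∈ Δ, ¬ M.sat w δ)) := by
  unfold GLModel.seqTrue
  constructor
  · rintro (⟨γ, hγ, hn⟩ | ⟨δ, hδ, hs⟩) ⟨h1, h2⟩
    exacts [hn (h1 γ hγ), h2 δ hδ hs]
  · intro h
    by_contra ht
    refine h ⟨fun γ hγ => ?_, fun δ hδ hs => ht (Or.inr ⟨δ, hδ, hs⟩)⟩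
    by_contra hn
    exact ht (Or.inl ⟨γ, hγ, hn⟩)

lemma step_init (M : GLModel) (w : M.World) (φ : Formula) :
    M.seqTrue w {φ} {φ} := by
  by_cases h : M.sat w φ
  · exact Or.inr ⟨φ, Finset.mem_singleton_self φ, h⟩
  · exact Or.inl ⟨φ, Finset.mem_singleton_self φ, h⟩

lemma step_initBot (M : GLModel) (w : M.World) :
    M.seqTrue w {Formula.bot} ∅ :=
  Or.inl ⟨Formula.bot, Finset.mem_singleton_self _, fun h => h⟩

lemma step_cut {M : GLModel} {w : M.World} {Γ Δ : Finset Formula} {φ : Formula}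
    (h1 : M.seqTrue w Γ (insert φ Δ)) (h2 : M.seqTrue w (insert φ Γ) Δ) :
    M.seqTrue w Γ Δ := by
  rw [seqTrue_iff] at h1 h2 ⊢
  rintro ⟨hL, hR⟩
  by_cases hφ : M.sat w φ
  · exact h2 ⟨fun γ hγ => (Finset.mem_insert.mp hγ).elim (fun e => e ▸ hφ) (hL γ), hR⟩
  · exact h1 ⟨hL, fun δ hδ => (Finset.mem_insert.mp hδ).elim (fun e => e ▸ hφ) (hR δ)⟩

lemma step_weak {M : GLModel} {w : M.World} {Γ Δ Γ' Δ' : Finset Formula}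
    (hΓ : Γ ⊆ Γ') (hΔ : Δ ⊆ Δ') (h : M.seqTrue w Γ Δ) : M.seqTrue w Γ' Δ' := by
  rcases h with ⟨γ, hγ, hn⟩ | ⟨δ, hδ, hs⟩
  · exact Or.inl ⟨γ, hΓ hγ, hn⟩
  · exact Or.inr ⟨δ, hΔ hδ, hs⟩

lemma step_impL {M : GLModel} {w : M.World} {Γ Δ : Finset Formula} {φ ψ : Formula}
    (h1 : M.seqTrue w Γ (insert φ Δ)) (h2 : M.seqTrue w (insert ψ Γ) Δ) :
    M.seqTrue w (insert (.imp φ ψ) Γ) Δ := by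
  rw [seqTrue_iff] at h1 h2 ⊢
  rintro ⟨hL, hR⟩
  have himp : M.sat w (.imp φ ψ) := hL _ (Finset.mem_insert_self _ _)
  have hLΓ : ∀ γ ∈ Γ, M.sat w γ := fun γ hγ => hL γ (Finset.mem_insert_of_mem hγ)
  by_cases hφ : M.sat w φ
  · exact h2 ⟨fun γ hγ => (Finset.mem_insert.mp hγ).elim (fun e => e ▸ himp hφ) (hLΓ γ), hR⟩
  · exact h1 ⟨hLΓ, fun δ hδ => (Finset.mem_insert.mp hδ).elim (fun e => e ▸ hφ) (hR δ)⟩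

lemma step_impR {M : GLModel} {w : M.World} {Γ Δ : Finset Formula} {φ ψ : Formula}
    (h : M.seqTrue w (insert φ Γ) (insert ψ Δ)) :
    M.seqTrue w Γ (insert (.imp φ ψ) Δ) := by
  rw [seqTrue_iff] at h ⊢
  rintro ⟨hL, hR⟩
  have himp : ¬ M.sat w (.imp φ ψ) := hR _ (Finset.mem_insert_self _ _)
  have hφ : M.sat w φ := by
    by_contra hφ
    exact himp (fun h' => absurd h' hφ)
  have hψ : ¬ M.sat w ψ := fun hψ => himp (fun _ => hψ)
  exact h ⟨fun γ hγ => (Finset.mem_insert.mp hγ).elim (fun e => e ▸ hφ) (hL γ),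
    fun δ hδ => (Finset.mem_insert.mp hδ).elim (fun e => e ▸ hψ)
      (fun hδ' => hR δ (Finset.mem_insert_of_mem hδ'))⟩

lemma step_boxL {M : GLModel} {w : M.World} {Γ Δ : Finset Formula} {φ : Formula}
    (hrefl : M.sat w ((Formula.box φ).imp φ))
    (h : M.seqTrue w (insert φ Γ) Δ) :
    M.seqTrue w (insert (.box φ) Γ) Δ := by
  rw [seqTrue_iff] at h ⊢
  rintro ⟨hL, hR⟩
  have hbox : M.sat w (.box φ) := hL _ (Finset.mem_insert_self _ _)
  exact h ⟨fun γ hγ => (Finset.mem_insert.mp hγ).elim (fun e => e ▸ hrefl hbox)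
    (fun hγ' => hL γ (Finset.mem_insert_of_mem hγ')), hR⟩

lemma step_boxGL {Γ : Finset Formula} {φ : Formula}
    (hp : ∀ (M : GLModel) (w : M.World),
      M.seqTrue w (Γ ∪ Γ.image .box ∪ {.box φ}) {φ})
    (M : GLModel) (w : M.World) : M.seqTrue w (Γ.image .box) {.box φ} := by
  rw [seqTrue_iff]
  rintro ⟨hL, hR⟩
  have hbox : ¬ M.sat w (.box φ) := hR _ (Finset.mem_singleton_self _)
  have hex : ∃ u, M.R w u ∧ ¬ M.sat u φ := by
    by_contra hc
    push_neg at hc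
    exact hbox (fun u hu => hc u hu)
  obtain ⟨y, ⟨hwy, hfy⟩, hmax⟩ :=
    M.max_exists {x | M.R w x ∧ ¬ M.sat x φ} hex
  have hboxΓ : ∀ γ ∈ Γ, M.sat w (Formula.box γ) := by
    intro γ hγ
    exact hL _ (Finset.mem_image_of_mem _ hγ)
  refine (seqTrue_iff M y _ _).mp (hp M y) ⟨?_, ?_⟩
  · intro χ hχ
    rcases Finset.mem_union.mp hχ with hχ' | hχ'
    · rcases Finset.mem_union.mp hχ' with hγ | hγ
      · exact hboxΓ χ hγ y hwy
      · obtain ⟨γ, hγΓ, rfl⟩ := Finset.mem_image.mp hγ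
        exact fun u' hu' => hboxΓ γ hγΓ u' (M.trans hwy hu')
    · have : χ = Formula.box φ := Finset.mem_singleton.mp hχ'
      subst this
      intro u' hu'
      by_contra hfu'
      exact hmax u' ⟨M.trans hwy hu', hfu'⟩ hu'
  · intro δ hδ
    rw [Finset.mem_singleton.mp hδ]
    exact hfy

lemma reflMono {M : GLModel} {w : M.World} {S S' : Finset Formula}
    (hsub : S ⊆ S') (h : M.reflexiveFor w S') : M.reflexiveFor w S :=
  fun α hα => h α (hsub hα)

lemma glsseq_sound {c lv Γ Δ} (h : GLSSeq c lv Γ Δ) :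
    (lv = .one → ∀ (M : GLModel) (w : M.World), M.seqTrue w Γ Δ) ∧
    ∃ S : Finset Formula, ∀ (M : GLModel) (w : M.World),
      M.reflexiveFor w S → M.seqTrue w Γ Δ := by
  induction h with
  | init c lv φ =>
      exact ⟨fun _ M w => step_init M w φ, ∅, fun M w _ => step_init M w φ⟩
  | initBot c lv =>
      exact ⟨fun _ M w => step_initBot M w, ∅, fun M w _ => step_initBot M w⟩
  | cut φ h1 h2 ih1 ih2 =>
      obtain ⟨S1, hS1⟩ := ih1.2
      obtain ⟨S2, hS2⟩ := ih2.2
      refine ⟨fun h M w => step_cut (ih1.1 h M w) (ih2.1 h M w), S1 ∪ S2, fun M w hr => ?_⟩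
      exact step_cut (hS1 M w (reflMono Finset.subset_union_left hr))
        (hS2 M w (reflMono Finset.subset_union_right hr))
  | weak hΓ hΔ h ih =>
      obtain ⟨S, hS⟩ := ih.2
      exact ⟨fun h' M w => step_weak hΓ hΔ (ih.1 h' M w), S,
        fun M w hr => step_weak hΓ hΔ (hS M w hr)⟩
  | impL h1 h2 ih1 ih2 =>
      obtain ⟨S1, hS1⟩ := ih1.2
      obtain ⟨S2, hS2⟩ := ih2.2
      refine ⟨fun h M w => step_impL (ih1.1 h M w) (ih2.1 h M w), S1 ∪ S2, fun M w hr => ?_⟩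
      exact step_impL (hS1 M w (reflMono Finset.subset_union_left hr))
        (hS2 M w (reflMono Finset.subset_union_right hr))
  | impR h ih =>
      obtain ⟨S, hS⟩ := ih.2
      exact ⟨fun h' M w => step_impR (ih.1 h' M w), S, fun M w hr => step_impR (hS M w hr)⟩
  | boxGL h ih =>
      exact ⟨fun _ => step_boxGL (ih.1 rfl), ∅, fun M w _ => step_boxGL (ih.1 rfl) M w⟩
  | boxL φ h ih =>
      obtain ⟨S, hS⟩ := ih.2
      refine ⟨fun h' => SeqLevel.noConfusion h', insert (Formula.box φ) S, fun M w hr => ?_⟩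
      exact step_boxL (hr φ (Finset.mem_insert_self _ _))
        (hS M w (reflMono (Finset.subset_insert _ _) hr))
  | lift h ih =>
      exact ⟨fun h' => SeqLevel.noConfusion h', ∅, fun M w _ => ih.1 rfl M w⟩

lemma principals_one : ∀ {lv Γ Δ} (t : GLSTree lv Γ Δ), lv = .one → t.principals = ∅ := by
  intro lv Γ Δ t
  induction t with
  | init lv φ => intro _; rfl
  | initBot lv => intro _; rfl
  | cut φ t1 t2 ih1 ih2 =>
      intro h; simp [GLSTree.principals, ih1 h, ih2 h]
  | weak Γ' Δ' hΓ hΔ t ih => intro h; simpa [GLSTree.principals] using ih h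
  | impL φ ψ t1 t2 ih1 ih2 =>
      intro h; simp [GLSTree.principals, ih1 h, ih2 h]
  | impR φ ψ t ih => intro h; simpa [GLSTree.principals] using ih h
  | boxGL Γ φ t ih => intro _; simpa [GLSTree.principals] using ih rfl
  | boxL φ t ih => intro h; exact nomatch h
  | lift t ih => intro h; exact nomatch h

lemma tree_sound : ∀ {lv Γ Δ} (t : GLSTree lv Γ Δ) (M : GLModel) (w : M.World),
    M.reflexiveFor w t.principals → M.seqTrue w Γ Δ := by
  intro lv Γ Δ t
  induction t with
  | init lv φ => exact fun M w _ => step_init M w φ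
  | initBot lv => exact fun M w _ => step_initBot M w
  | cut φ t1 t2 ih1 ih2 =>
      intro M w hr
      simp only [GLSTree.principals] at hr
      exact step_cut (ih1 M w (reflMono Finset.subset_union_left hr))
        (ih2 M w (reflMono Finset.subset_union_right hr))
  | weak Γ' Δ' hΓ hΔ t ih =>
      intro M w hr
      exact step_weak hΓ hΔ (ih M w hr)
  | impL φ ψ t1 t2 ih1 ih2 =>
      intro M w hr
      simp only [GLSTree.principals] at hr
      exact step_impL (ih1 M w (reflMono Finset.subset_union_left hr))
        (ih2 M w (reflMono Finset.subset_union_right hr))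
  | impR φ ψ t ih =>
      intro M w hr
      exact step_impR (ih M w hr)
  | boxGL Γ φ t ih =>
      intro M w _
      refine step_boxGL (fun M' w' => ih M' w' ?_) M w
      rw [principals_one t rfl]
      exact fun α hα => absurd hα (Finset.notMem_empty _)
  | boxL φ t ih =>
      intro M w hr
      simp only [GLSTree.principals] at hr
      exact step_boxL (hr φ (Finset.mem_insert_self _ _))
        (ih M w (reflMono (Finset.subset_insert _ _) hr))
  | lift t ih =>
      intro M w hr
      exact ih M w hr

end Soundness

/-- Soundness of GLS_seq: if Ψ ⇛ Φ is provable in GLS_seq then there is a finite set Σ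
of formulas such that Ψ ⇛ Φ is true at every Σ-reflexive world of every GL-model;
moreover, for any GLS_seq-proof P of Ψ ⇛ Φ, Σ can be taken to be the set of principal
formulas of the (□L) rules of P. -/
theorem gls_soundness (Ψ Φ : Finset Formula) (h : GLSSeq true SeqLevel.two Ψ Φ) :
    (∃ S : Finset Formula, ∀ (M : GLModel) (w : M.World),
        M.reflexiveFor w S → M.seqTrue w Ψ Φ) ∧
    ∀ P : GLSTree SeqLevel.two Ψ Φ, ∀ (M : GLModel) (w : M.World),
        M.reflexiveFor w P.principals → M.seqTrue w Ψ Φ := by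
  exact ⟨(glsseq_sound h).2, fun P M w hr => tree_sound P M w hr⟩
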